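/- arXiv:2503.17967 — 4 statements merged into one kernel-verified Lean document; each statement's English description precedes it below -/
import Mathlib

section
/- Let K = ℚ(√(-D)) be an imaginary quadratic field with D > 3 squarefree and D ≡ 3 mod 4, and let p be a prime with (-D|p) = 1 (so p splits in O_K). Then the number of pairs (x,y) of positive integers with x² + D·y² = 4p equals 1 if p·O_K splits into principal prime ideals, and 0 otherwise. -/
/-!
Every algebraic integer of `K` is `(x + yθ)/2` with `x, y ∈ ℤ` and norm `(x² + Dy²)/4`, so the
only units are `±1` because `D > 4`. A positive solution `(x, y)` of `x² + Dy² = 4p` gives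
`p = α ᾱ` with `α = (x + yθ)/2` and `ᾱ = (x - yθ)/2` both of prime norm `p`, hence prime; so
`p 𝓞_K = (α)(ᾱ)`. Any other solution `α'` is a prime factor of `α ᾱ`, hence `±α` or `±ᾱ`, and
positivity of the coordinates leaves only `α`. Conversely, if `p 𝓞_K = P Q` with `P = (π)` prime,
then `N(P) = p`, and writing `π = (x + yθ)/2` gives `x² + Dy² = 4p`; here `y ≠ 0` since `p` is not
a square, and `x ≠ 0` since otherwise `D = p`, contradicting `(-D | p) ≠ 0`.
-/

open NumberField
open scoped Classical

lemma Squarefree.exists_intCast_eq_of_mul_sq_eq {D : ℕ} (hD : Squarefree D) {s : ℚ} {k : ℤ}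
    (h : D * s ^ 2 = k) : ∃ y : ℤ, (y : ℚ) = s := by
  have hnum : (D : ℤ) * s.num ^ 2 = k * s.den ^ 2 := by
    have hden : (s.den : ℚ) ≠ 0 := by exact_mod_cast s.den_nz
    rw [← Rat.num_div_den s, div_pow, mul_div_assoc', div_eq_iff (pow_ne_zero 2 hden)] at h
    exact_mod_cast h
  have hdvd : s.den ^ 2 ∣ D * s.num.natAbs ^ 2 := by
    rw [← Int.natCast_dvd_natCast]
    push_cast
    rw [sq_abs, hnum]
    exact dvd_mul_left _ _
  have hden : s.den = 1 := Nat.isUnit_iff.mp <| hD s.den <| by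
    rw [← pow_two]
    exact (Nat.Coprime.pow 2 2 s.reduced.symm).dvd_of_dvd_mul_right hdvd
  exact ⟨s.num, by rw [← Rat.num_div_den s, hden]; simp⟩

lemma exists_pos_of_sq_add_mul_sq_eq {D p : ℕ} [Fact p.Prime] (hD3 : 3 < D) (hDmod : D % 4 = 3)
    (hsplit : legendreSym p (-(D : ℤ)) = 1) {x y : ℤ} (h : x ^ 2 + D * y ^ 2 = 4 * p) :
    ∃ x y : ℤ, 0 < x ∧ 0 < y ∧ x ^ 2 + D * y ^ 2 = 4 * p := by
  have hp : p.Prime := Fact.out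
  have hy : y ≠ 0 := by
    rintro rfl
    obtain ⟨k, rfl⟩ : (2 : ℤ) ∣ x := Int.prime_two.dvd_of_dvd_pow (n := 2) ⟨2 * p, by linarith⟩
    have hk : ((k.natAbs * k.natAbs : ℕ) : ℤ) = p := by rw [Int.natAbs_mul_self]; linarith
    exact hp.not_isSquare ⟨k.natAbs, by exact_mod_cast hk.symm⟩
  have hx : x ≠ 0 := by
    rintro rfl
    have hDp : D ∣ p := by
      refine (Nat.Coprime.pow_right 2 (Nat.coprime_two_right.mpr (Nat.odd_iff.mpr (by omega))) :
        D.Coprime (2 ^ 2)).dvd_of_dvd_mul_left ⟨y.natAbs ^ 2, ?_⟩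
      have : ((2 ^ 2 * p : ℕ) : ℤ) = ((D * y.natAbs ^ 2 : ℕ) : ℤ) := by
        push_cast
        rw [sq_abs]
        linarith
      exact_mod_cast this
    obtain rfl := (hp.eq_one_or_self_of_dvd D hDp).resolve_left (by omega)
    have := (legendreSym.eq_zero_iff D (-(D : ℤ))).mpr (by simp)
    exact one_ne_zero (hsplit.symm.trans this)
  exact ⟨|x|, |y|, abs_pos.mpr hx, abs_pos.mpr hy, by rwa [sq_abs, sq_abs]⟩

section QuadraticField

variable {K : Type*} [Field K] [NumberField K] {D p : ℕ} {θ : K}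

lemma ratCast_ne_of_sq_eq_neg (hD : 0 < D) (hθ : θ ^ 2 = -(D : K)) (q : ℚ) : (q : K) ≠ θ := by
  rintro rfl
  have : q ^ 2 = -(D : ℚ) := by exact_mod_cast hθ
  nlinarith [sq_nonneg q, (by exact_mod_cast hD : (0 : ℚ) < D)]

lemma linearIndependent_one_of_sq_eq_neg (hD : 0 < D) (hθ : θ ^ 2 = -(D : K)) :
    LinearIndependent ℚ ![(1 : K), θ] := by
  refine LinearIndependent.pair_iff.mpr fun s t hst => ?_
  rw [Rat.smul_def, Rat.smul_def, mul_one] at hst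
  obtain rfl | ht := eq_or_ne t 0
  · simpa using hst
  · refine absurd ?_ (ratCast_ne_of_sq_eq_neg hD hθ (-s / t))
    rw [Rat.cast_div, Rat.cast_neg, div_eq_iff (by exact_mod_cast ht)]
    linear_combination -hst

noncomputable def basisOneTheta (hD : 0 < D) (hθ : θ ^ 2 = -(D : K))
    (hrank : Module.finrank ℚ K = 2) : Module.Basis (Fin 2) ℚ K :=
  basisOfLinearIndependentOfCardEqFinrank (linearIndependent_one_of_sq_eq_neg hD hθ)
    (by simp [hrank])

lemma coe_basisOneTheta (hD : 0 < D) (hθ : θ ^ 2 = -(D : K))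
    (hrank : Module.finrank ℚ K = 2) : ⇑(basisOneTheta hD hθ hrank) = ![1, θ] :=
  coe_basisOfLinearIndependentOfCardEqFinrank _ _

lemma basisOneTheta_equivFun (hD : 0 < D) (hθ : θ ^ 2 = -(D : K))
    (hrank : Module.finrank ℚ K = 2) (a b : ℚ) :
    (basisOneTheta hD hθ hrank).equivFun ((a : K) + b * θ) = ![a, b] := by
  rw [← LinearEquiv.eq_symm_apply, Module.Basis.equivFun_symm_apply, Fin.sum_univ_two,
    coe_basisOneTheta]
  simp [Rat.smul_def]

lemma leftMulMatrix_basisOneTheta (hD : 0 < D) (hθ : θ ^ 2 = -(D : K))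
    (hrank : Module.finrank ℚ K = 2) (a b : ℚ) :
    Algebra.leftMulMatrix (basisOneTheta hD hθ hrank) ((a : K) + b * θ) =
      !![a, -D * b; b, a] := by
  have h0 : ((a : K) + b * θ) * 1 = ((a : ℚ) : K) + (b : ℚ) * θ := by ring
  have h1 : ((a : K) + b * θ) * θ = ((-D * b : ℚ) : K) + (a : ℚ) * θ := by
    push_cast
    linear_combination b * hθ
  ext i j
  fin_cases i <;> fin_cases j <;>
    simp only [Algebra.leftMulMatrix_eq_repr_mul, coe_basisOneTheta, ← Module.Basis.equivFun_apply,
      Fin.zero_eta, Fin.mk_one, Matrix.cons_val_zero, Matrix.cons_val_one, h0, h1,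
      basisOneTheta_equivFun] <;> simp

lemma norm_add_mul_theta (hD : 0 < D) (hθ : θ ^ 2 = -(D : K))
    (hrank : Module.finrank ℚ K = 2) (a b : ℚ) :
    Algebra.norm ℚ ((a : K) + b * θ) = a ^ 2 + D * b ^ 2 := by
  rw [Algebra.norm_eq_matrix_det (basisOneTheta hD hθ hrank), leftMulMatrix_basisOneTheta,
    Matrix.det_fin_two_of]
  ring

lemma trace_add_mul_theta (hD : 0 < D) (hθ : θ ^ 2 = -(D : K))
    (hrank : Module.finrank ℚ K = 2) (a b : ℚ) :
    Algebra.trace ℚ K ((a : K) + b * θ) = 2 * a := by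
  rw [Algebra.trace_eq_matrix_trace (basisOneTheta hD hθ hrank), leftMulMatrix_basisOneTheta,
    Matrix.trace_fin_two_of]
  ring

lemma exists_eq_add_mul_theta (hD : 0 < D) (hθ : θ ^ 2 = -(D : K))
    (hrank : Module.finrank ℚ K = 2) (α : K) : ∃ a b : ℚ, α = a + b * θ := by
  refine ⟨(basisOneTheta hD hθ hrank).equivFun α 0, (basisOneTheta hD hθ hrank).equivFun α 1, ?_⟩
  conv_lhs => rw [← (basisOneTheta hD hθ hrank).sum_equivFun α]
  simp [Fin.sum_univ_two, coe_basisOneTheta, Rat.smul_def]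

lemma exists_eq_half_add_mul_theta (hD : 0 < D) (hDsf : Squarefree D) (hθ : θ ^ 2 = -(D : K))
    (hrank : Module.finrank ℚ K = 2) (α : 𝓞 K) : ∃ x y : ℤ, (α : K) = (x + y * θ) / 2 := by
  obtain ⟨a, b, hab⟩ := exists_eq_add_mul_theta hD hθ hrank (α : K)
  have ht := Algebra.coe_trace_int α
  have hn := Algebra.coe_norm_int α
  rw [hab, trace_add_mul_theta hD hθ hrank] at ht
  rw [hab, norm_add_mul_theta hD hθ hrank] at hn
  set t := Algebra.trace ℤ (𝓞 K) α
  set n := Algebra.norm ℤ α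
  -- `Tr α = 2a` and `N α = a² + Db²` are integers, hence so is `D(2b)² = 4 N α - (Tr α)²`.
  obtain ⟨s, hs⟩ := hDsf.exists_intCast_eq_of_mul_sq_eq (s := 2 * b) (k := 4 * n - t ^ 2) <| by
    push_cast
    rw [ht, hn]
    ring
  refine ⟨t, s, ?_⟩
  rw [hab, ← Rat.cast_intCast t, ← Rat.cast_intCast s, ht, hs]
  push_cast
  ring

lemma four_mul_norm_eq (hD : 0 < D) (hθ : θ ^ 2 = -(D : K)) (hrank : Module.finrank ℚ K = 2)
    {α : 𝓞 K} {x y : ℤ} (hα : (α : K) = (x + y * θ) / 2) :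
    4 * Algebra.norm ℤ α = x ^ 2 + D * y ^ 2 := by
  have h := Algebra.coe_norm_int α
  rw [hα, show ((x : K) + y * θ) / 2 = ((x / 2 : ℚ) : K) + (y / 2 : ℚ) * θ by push_cast; ring,
    norm_add_mul_theta hD hθ hrank] at h
  have : (4 * Algebra.norm ℤ α : ℚ) = x ^ 2 + D * y ^ 2 := by
    rw [h]
    ring
  exact_mod_cast this

lemma isIntegral_half_add_mul_theta (hθ : θ ^ 2 = -(D : K)) {x y n : ℤ}
    (h : x ^ 2 + D * y ^ 2 = 4 * n) : IsIntegral ℤ ((x + y * θ) / 2 : K) := by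
  refine ⟨Polynomial.X ^ 2 - Polynomial.C x * Polynomial.X + Polynomial.C n, by monicity!, ?_⟩
  have hK : (x : K) ^ 2 + D * y ^ 2 = 4 * n := by exact_mod_cast h
  simp only [Polynomial.eval₂_add, Polynomial.eval₂_sub, Polynomial.eval₂_mul,
    Polynomial.eval₂_pow, Polynomial.eval₂_X, Polynomial.eval₂_C]
  simp only [eq_intCast]
  linear_combination (y ^ 2 / 4 : K) * hθ - hK / 4

lemma half_add_mul_theta_injective (hD : 0 < D) (hθ : θ ^ 2 = -(D : K)) {x y x' y' : ℤ}
    (h : ((x + y * θ) / 2 : K) = (x' + y' * θ) / 2) : x = x' ∧ y = y' := by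
  have hli := (LinearIndependent.pair_iff (R := ℚ) (x := (1 : K)) (y := θ)).mp
    (linearIndependent_one_of_sq_eq_neg hD hθ)
  have hsub : ((x - x' : ℤ) : ℚ) • (1 : K) + ((y - y' : ℤ) : ℚ) • θ = 0 := by
    rw [Rat.smul_def, Rat.smul_def]
    push_cast
    linear_combination 2 * h
  obtain ⟨hx, hy⟩ := hli _ _ hsub
  rw [Int.cast_eq_zero, sub_eq_zero] at hx hy
  exact ⟨hx, hy⟩

lemma coe_unit_eq_one_or_neg_one (hD : 4 < D) (hDsf : Squarefree D) (hθ : θ ^ 2 = -(D : K))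
    (hrank : Module.finrank ℚ K = 2) (u : (𝓞 K)ˣ) :
    ((u : 𝓞 K) : K) = 1 ∨ ((u : 𝓞 K) : K) = -1 := by
  obtain ⟨x, y, hu⟩ := exists_eq_half_add_mul_theta (by omega) hDsf hθ hrank u
  have hnorm := four_mul_norm_eq (by omega) hθ hrank hu
  have hD' : (4 : ℤ) < D := by exact_mod_cast hD
  obtain ⟨rfl, hx⟩ : y = 0 ∧ x ^ 2 = 4 := by
    rcases Int.isUnit_iff.mp (u.isUnit.map (Algebra.norm ℤ)) with h | h <;> rw [h] at hnorm
    · obtain rfl : y = 0 := by nlinarith [sq_nonneg x, sq_nonneg y]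
      exact ⟨rfl, by linarith⟩
    · nlinarith [sq_nonneg x, sq_nonneg y]
  rcases sq_eq_sq_iff_eq_or_eq_neg.mp (hx.trans (by norm_num : (4 : ℤ) = 2 ^ 2)) with rfl | rfl
  · left
    rw [hu]
    norm_num
  · right
    rw [hu]
    norm_num

lemma absNorm_span_singleton_eq_iff (hD : 0 < D) (hθ : θ ^ 2 = -(D : K))
    (hrank : Module.finrank ℚ K = 2) {α : 𝓞 K} {x y : ℤ} (hα : (α : K) = (x + y * θ) / 2)
    (n : ℕ) : Ideal.absNorm (Ideal.span {α}) = n ↔ x ^ 2 + D * y ^ 2 = 4 * n := by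
  have h := four_mul_norm_eq hD hθ hrank hα
  have : 0 ≤ x ^ 2 + D * y ^ 2 := by positivity
  rw [Ideal.absNorm_span_singleton]
  omega

lemma prime_of_sq_add_mul_sq_eq (hD : 0 < D) (hθ : θ ^ 2 = -(D : K))
    (hrank : Module.finrank ℚ K = 2) (hp : p.Prime) {α : 𝓞 K} {x y : ℤ}
    (hα : (α : K) = (x + y * θ) / 2) (h : x ^ 2 + D * y ^ 2 = 4 * p) : Prime α := by
  have habs := (absNorm_span_singleton_eq_iff hD hθ hrank hα p).mpr h
  refine Ideal.prime_of_irreducible_absNorm_span ?_ (habs ▸ hp)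
  rintro rfl
  simp [hp.ne_zero.symm] at habs

lemma exists_mul_eq_of_sq_add_mul_sq_eq (hθ : θ ^ 2 = -(D : K)) {x y : ℤ} {n : ℕ}
    (h : x ^ 2 + D * y ^ 2 = 4 * n) :
    ∃ α β : 𝓞 K, (α : K) = (x + y * θ) / 2 ∧ (β : K) = (x + (-y : ℤ) * θ) / 2 ∧ α * β = n := by
  have h' : x ^ 2 + D * (-y) ^ 2 = 4 * n := by rwa [neg_sq]
  refine ⟨⟨_, isIntegral_half_add_mul_theta hθ h⟩, ⟨_, isIntegral_half_add_mul_theta hθ h'⟩,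
    rfl, rfl, RingOfIntegers.ext ?_⟩
  have hK : (x : K) ^ 2 + D * y ^ 2 = 4 * n := by exact_mod_cast h
  show (x + y * θ) / 2 * ((x + (-y : ℤ) * θ) / 2) = algebraMap (𝓞 K) K n
  rw [map_natCast]
  push_cast
  linear_combination (-(y : K) ^ 2 / 4) * hθ + hK / 4

lemma eq_or_eq_neg_of_associated (hD : 4 < D) (hDsf : Squarefree D) (hθ : θ ^ 2 = -(D : K))
    (hrank : Module.finrank ℚ K = 2) {β γ : 𝓞 K} {a b c d : ℤ}
    (hβ : (β : K) = (a + b * θ) / 2) (hγ : (γ : K) = (c + d * θ) / 2) (h : Associated β γ) :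
    (a = c ∧ b = d) ∨ (-a = c ∧ -b = d) := by
  obtain ⟨u, rfl⟩ := h
  replace hγ : (β : K) * ((u : 𝓞 K) : K) = (c + d * θ) / 2 := hγ
  rcases coe_unit_eq_one_or_neg_one hD hDsf hθ hrank u with hu | hu <;> rw [hu, hβ] at hγ
  · exact .inl (half_add_mul_theta_injective (by omega) hθ (by rw [← hγ, mul_one]))
  · exact .inr (half_add_mul_theta_injective (by omega) hθ (by rw [← hγ]; push_cast; ring))

lemma exists_principal_primes_of_sq_add_mul_sq_eq (hD : 0 < D) (hθ : θ ^ 2 = -(D : K))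
    (hrank : Module.finrank ℚ K = 2) (hp : p.Prime) {x y : ℤ} (h : x ^ 2 + D * y ^ 2 = 4 * p) :
    ∃ P Q : Ideal (𝓞 K), P.IsPrime ∧ Q.IsPrime
      ∧ Submodule.IsPrincipal P ∧ Submodule.IsPrincipal Q
      ∧ Ideal.span {(p : 𝓞 K)} = P * Q := by
  obtain ⟨α, β, hα, hβ, hαβ⟩ := exists_mul_eq_of_sq_add_mul_sq_eq hθ h
  have hα_prime := prime_of_sq_add_mul_sq_eq hD hθ hrank hp hα h
  have hβ_prime := prime_of_sq_add_mul_sq_eq hD hθ hrank hp hβ (by rwa [neg_sq])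
  exact ⟨Ideal.span {α}, Ideal.span {β},
    (Ideal.span_singleton_prime hα_prime.ne_zero).mpr hα_prime,
    (Ideal.span_singleton_prime hβ_prime.ne_zero).mpr hβ_prime,
    ⟨α, rfl⟩, ⟨β, rfl⟩, by rw [Ideal.span_singleton_mul_span_singleton, hαβ]⟩

lemma eq_of_sq_add_mul_sq_eq (hD : 4 < D) (hDsf : Squarefree D) (hθ : θ ^ 2 = -(D : K))
    (hrank : Module.finrank ℚ K = 2) (hp : p.Prime) {x y x' y' : ℤ} (hx : 0 < x) (hy : 0 < y)
    (hx' : 0 < x') (hy' : 0 < y') (h : x ^ 2 + D * y ^ 2 = 4 * p)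
    (h' : x' ^ 2 + D * y' ^ 2 = 4 * p) : x = x' ∧ y = y' := by
  have hD0 : 0 < D := by omega
  obtain ⟨α, β, hα, hβ, hαβ⟩ := exists_mul_eq_of_sq_add_mul_sq_eq hθ h
  obtain ⟨α', β', hα', -, hαβ'⟩ := exists_mul_eq_of_sq_add_mul_sq_eq hθ h'
  have hα_prime := prime_of_sq_add_mul_sq_eq hD0 hθ hrank hp hα h
  have hβ_prime := prime_of_sq_add_mul_sq_eq hD0 hθ hrank hp hβ (by rwa [neg_sq])
  have hα'_prime := prime_of_sq_add_mul_sq_eq hD0 hθ hrank hp hα' h'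
  have hdvd : α' ∣ α * β := hαβ ▸ hαβ' ▸ dvd_mul_right α' β'
  rcases hα'_prime.dvd_or_dvd hdvd with hd | hd
  · have := eq_or_eq_neg_of_associated hD hDsf hθ hrank hα' hα
      (hα'_prime.irreducible.associated_of_dvd hα_prime.irreducible hd)
    omega
  · have := eq_or_eq_neg_of_associated hD hDsf hθ hrank hα' hβ
      (hα'_prime.irreducible.associated_of_dvd hβ_prime.irreducible hd)
    omega

lemma exists_sq_add_mul_sq_eq_of_span_eq_mul (hD : 0 < D) (hDsf : Squarefree D)
    (hθ : θ ^ 2 = -(D : K)) (hrank : Module.finrank ℚ K = 2) (hp : p.Prime)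
    {P Q : Ideal (𝓞 K)} (hP : P.IsPrime) (hQ : Q.IsPrime) (hPprin : Submodule.IsPrincipal P)
    (hPQ : Ideal.span {(p : 𝓞 K)} = P * Q) : ∃ x y : ℤ, x ^ 2 + D * y ^ 2 = 4 * p := by
  have hnorm : Ideal.absNorm P * Ideal.absNorm Q = p ^ 2 := by
    rw [← map_mul, ← hPQ, Ideal.absNorm_span_natCast, RingOfIntegers.rank, hrank]
  have hPp := ((hp.mul_eq_prime_sq_iff (mt Ideal.absNorm_eq_one_iff.mp hP.ne_top)
    (mt Ideal.absNorm_eq_one_iff.mp hQ.ne_top)).mp hnorm).1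
  obtain ⟨π, rfl⟩ := hPprin
  obtain ⟨x, y, hπ⟩ := exists_eq_half_add_mul_theta hD hDsf hθ hrank π
  exact ⟨x, y, (absNorm_span_singleton_eq_iff hD hθ hrank hπ p).mp hPp⟩

end QuadraticField

/-- Let `K = ℚ(√-D)` with `D > 3` squarefree, `D ≡ 3 mod 4`, and let `p` be a prime
with `(-D|p) = 1` (so `p` splits in `𝓞 K`). Then the number of pairs `(x,y)` of positive
integers with `x² + D·y² = 4p` is `1` if `p·𝓞 K` splits into principal prime ideals and
`0` otherwise. -/
theorem norm_equation_count (D p : ℕ) [Fact p.Prime]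
    (hD3 : 3 < D) (hDsf : Squarefree D) (hDmod : D % 4 = 3)
    (hsplit : legendreSym p (-(D : ℤ)) = 1)
    (K : Type*) [Field K] [NumberField K]
    (θ : K) (hθ : θ ^ 2 = -(D : K)) (hrank : Module.finrank ℚ K = 2) :
    Set.ncard {xy : ℤ × ℤ | 0 < xy.1 ∧ 0 < xy.2
        ∧ xy.1 ^ 2 + (D : ℤ) * xy.2 ^ 2 = 4 * (p : ℤ)}
      = if ∃ P Q : Ideal (𝓞 K), P.IsPrime ∧ Q.IsPrime
            ∧ Submodule.IsPrincipal P ∧ Submodule.IsPrincipal Q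
            ∧ Ideal.span {(p : 𝓞 K)} = P * Q
        then 1 else 0 := by
  have hp : p.Prime := Fact.out
  have hD : 4 < D := by omega
  split_ifs with hprincipal
  · obtain ⟨P, Q, hP, hQ, hPprin, -, hPQ⟩ := hprincipal
    obtain ⟨x₀, y₀, h₀⟩ :=
      exists_sq_add_mul_sq_eq_of_span_eq_mul (by omega) hDsf hθ hrank hp hP hQ hPprin hPQ
    obtain ⟨x, y, hx, hy, h⟩ := exists_pos_of_sq_add_mul_sq_eq hD3 hDmod hsplit h₀
    rw [Set.ncard_eq_one]
    refine ⟨(x, y), Set.eq_singleton_iff_unique_mem.mpr ⟨⟨hx, hy, h⟩, ?_⟩⟩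
    rintro ⟨x', y'⟩ ⟨hx', hy', h'⟩
    obtain ⟨rfl, rfl⟩ := eq_of_sq_add_mul_sq_eq hD hDsf hθ hrank hp hx hy hx' hy' h h'
    rfl
  · convert Set.ncard_empty (ℤ × ℤ)
    refine Set.eq_empty_of_forall_notMem ?_
    rintro ⟨x, y⟩ ⟨-, -, h⟩
    exact hprincipal (exists_principal_primes_of_sq_add_mul_sq_eq (by omega) hθ hrank hp h)
end

section
/- Let p be an odd prime and e ≥ 1. Then the sum over odd residues x mod 2^{e+3} of ((x² - 4p)|2)^e equals 4·(-2)^e, where ((x²-4p)|2) is the Kronecker symbol at 2; for e = 0 the sum over odd x mod 8 of 1 equals 4. -/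
/-! For odd `x` and `p` we have `x² ≡ 1` and `4p ≡ 4 (mod 8)`, so `x² - 4p ≡ 5 (mod 8)` and every
term of the sum is `χ₈(5)^e = (-1)^e`; there are `2^(e+2)` odd residues mod `2^(e+3)`. -/

open Finset

lemma Nat.card_filter_odd_range_two_mul (n : ℕ) : #{x ∈ range (2 * n) | Odd x} = n := by
  have h : {x ∈ range (2 * n) | Odd x} = (range n).image (fun k => 2 * k + 1) := by
    ext x
    simp only [mem_filter, mem_range, mem_image, Nat.odd_iff]
    constructor
    · rintro ⟨hx, hodd⟩
      exact ⟨x / 2, by omega, by omega⟩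
    · rintro ⟨k, hk, rfl⟩
      omega
  rw [h, Finset.card_image_of_injective _ (fun a b hab => by omega), card_range]

lemma ZMod.intCast_sq_sub_four_mul_of_odd {a b : ℤ} (ha : Odd a) (hb : Odd b) :
    ((a ^ 2 - 4 * b : ℤ) : ZMod 8) = 5 := by
  obtain ⟨k, rfl⟩ := ha
  obtain ⟨m, rfl⟩ := hb
  push_cast
  generalize (k : ZMod 8) = k
  generalize (m : ZMod 8) = m
  revert k m
  decide

lemma ZMod.χ₈_intCast_sq_sub_four_mul_of_odd {a b : ℤ} (ha : Odd a) (hb : Odd b) :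
    χ₈ ((a ^ 2 - 4 * b : ℤ) : ZMod 8) = -1 := by
  rw [ZMod.intCast_sq_sub_four_mul_of_odd ha hb]
  decide

theorem sum_chi8_local_at_two_general (p : ℕ) (hpodd : Odd p) (e : ℕ) :
    (∑ x ∈ (Finset.range (2 ^ (e + 3))).filter (fun x => Odd x),
        (ZMod.χ₈ (((x : ℤ) ^ 2 - 4 * (p : ℤ) : ℤ) : ZMod 8)) ^ e = 4 * (-2 : ℤ) ^ e)
    ∧ ((Finset.range 8).filter (fun x => Odd x)).card = 4 := by
  refine ⟨?_, Nat.card_filter_odd_range_two_mul 4⟩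
  have hp : Odd (p : ℤ) := hpodd.natCast
  calc ∑ x ∈ (range (2 ^ (e + 3))).filter (fun x => Odd x),
          (ZMod.χ₈ (((x : ℤ) ^ 2 - 4 * (p : ℤ) : ℤ) : ZMod 8)) ^ e
      = ∑ x ∈ (range (2 * 2 ^ (e + 2))).filter (fun x => Odd x), (-1 : ℤ) ^ e := by
        rw [pow_succ', sum_congr rfl]
        intro x hx
        rw [ZMod.χ₈_intCast_sq_sub_four_mul_of_odd (mem_filter.mp hx).2.natCast hp]
    _ = 4 * (-2 : ℤ) ^ e := by
        rw [sum_const, Nat.card_filter_odd_range_two_mul, nsmul_eq_mul, neg_pow (2 : ℤ)]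
        push_cast
        ring

/-- For an odd prime `p` and `e ≥ 1`, the sum over odd residues `x mod 2^{e+3}` of
`((x² - 4p)|2)^e` (Kronecker symbol at 2, i.e. `χ₈`) equals `4·(-2)^e`; and for
`e = 0` the number of odd residues `x mod 8` is `4`. -/
theorem sum_chi8_local_at_two (p : ℕ) (hp : p.Prime) (hpodd : Odd p) (e : ℕ) (he : 1 ≤ e) :
    (∑ x ∈ (Finset.range (2 ^ (e + 3))).filter (fun x => Odd x),
        (ZMod.χ₈ (((x : ℤ) ^ 2 - 4 * (p : ℤ) : ℤ) : ZMod 8)) ^ e = 4 * (-2 : ℤ) ^ e)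
    ∧ ((Finset.range 8).filter (fun x => Odd x)).card = 4 :=
  sum_chi8_local_at_two_general p hpodd e
end

section
/- With c̄ = (1/3)·∏_{ℓ>2 prime} (1 - ℓ^{-2} - ℓ^{-3}/(1-ℓ^{-2})), A = ∏_p (1 + p/((p+1)²(p-1))), and Q(d) the multiplicative function with Q(2)=1 and Q(q) = q²/(q⁴-2q²-q+1) for odd primes q supported on squarefree d, the Euler product identities (ζ(2)·c̄/A)·∑_{d≥1} Q(d) = 8/11 and ζ(2)·c̄·∑_{d≥1} Q(d)/d = 2/3 hold. -/
open scoped Real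

/-- `Q` is the multiplicative function supported on squarefree numbers with
`Q(q) = q²/(q⁴ - 2q² - q + 1)` at odd primes `q` and `Q(2) = 1`. -/
noncomputable def murmurQ (d : ℕ) : ℝ :=
  if Squarefree d then
    ∏ q ∈ d.primeFactors.erase 2,
      (q : ℝ) ^ 2 / ((q : ℝ) ^ 4 - 2 * (q : ℝ) ^ 2 - (q : ℝ) + 1)
  else 0

/-- `c̄ = (1/3)·∏_{ℓ>2} (1 - ℓ⁻² - ℓ⁻³/(1-ℓ⁻²))`, product over odd primes. -/
noncomputable def murmurCbar : ℝ :=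
  (1 / 3) * ∏' ℓ : {q : Nat.Primes // (q : ℕ) ≠ 2},
    (1 - ((ℓ : Nat.Primes) : ℝ)⁻¹ ^ 2
       - ((ℓ : Nat.Primes) : ℝ)⁻¹ ^ 3 / (1 - ((ℓ : Nat.Primes) : ℝ)⁻¹ ^ 2))

/-- `A = ∏_p (1 + p/((p+1)²(p-1)))`, product over all primes. -/
noncomputable def murmurA : ℝ :=
  ∏' p : Nat.Primes, (1 + (p : ℝ) / (((p : ℝ) + 1) ^ 2 * ((p : ℝ) - 1)))

/-!
Every quantity here is an absolutely convergent Euler product. For `ζ(2)` this is the Euler product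
of the completely multiplicative `n ↦ n⁻²`; `c̄`, `A`, `∑ Q(d)` and `∑ Q(d)/d` are Euler products
`∏_p (1 + v p)` of multiplicative functions supported on squarefree numbers, and the bound
`|v p| ≤ 1/(p(p-1))` for odd `p` gives absolute convergence. Multiplying prime by prime, the local
factors at an odd prime satisfy an exact rational identity (they multiply to the local factor of
`A`, resp. to `1`), so only the factors at `2` survive: `24/11`, resp. `2`, which together with the
`1/3` in `c̄` give `8/11` and `2/3`.
-/

open Finset

lemma Nat.Prime.three_le_of_ne_two {p : ℕ} (hp : p.Prime) (h2 : p ≠ 2) : 3 ≤ p := by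
  have := hp.two_le
  omega

noncomputable def squarefreeProd {R : Type*} [CommMonoidWithZero R] (v : ℕ → R) (d : ℕ) : R :=
  if Squarefree d then ∏ p ∈ d.primeFactors, v p else 0

section Algebraic

variable {R : Type*} [CommMonoidWithZero R] (v : ℕ → R)

@[simp]
lemma squarefreeProd_zero : squarefreeProd v 0 = 0 := by
  simp [squarefreeProd]

@[simp]
lemma squarefreeProd_one : squarefreeProd v 1 = 1 := by
  simp [squarefreeProd]

lemma squarefreeProd_mul {m n : ℕ} (h : m.Coprime n) :
    squarefreeProd v (m * n) = squarefreeProd v m * squarefreeProd v n := by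
  unfold squarefreeProd
  by_cases hm : Squarefree m
  · by_cases hn : Squarefree n
    · rw [if_pos hm, if_pos hn, if_pos ((Nat.squarefree_mul h).mpr ⟨hm, hn⟩),
        Nat.Coprime.primeFactors_mul h, prod_union h.disjoint_primeFactors]
    · rw [if_neg hn, if_neg fun hmn => hn hmn.of_mul_right, mul_zero]
  · rw [if_neg hm, if_neg fun hmn => hm hmn.of_mul_left, zero_mul]

lemma squarefreeProd_prime {p : ℕ} (hp : p.Prime) : squarefreeProd v p = v p := by
  rw [squarefreeProd, if_pos hp.squarefree, hp.primeFactors, prod_singleton]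

lemma squarefreeProd_prime_pow {p e : ℕ} (hp : p.Prime) (he : 2 ≤ e) :
    squarefreeProd v (p ^ e) = 0 := by
  rw [squarefreeProd, if_neg]
  rw [Nat.squarefree_pow_iff hp.ne_one (by omega)]
  omega

end Algebraic

lemma squarefreeProd_div_self {K : Type*} [Field K] (v : ℕ → K) (d : ℕ) :
    squarefreeProd v d / d = squarefreeProd (fun p => v p / p) d := by
  unfold squarefreeProd
  split_ifs with hd
  · rw [prod_div_distrib, ← Nat.cast_prod, Nat.prod_primeFactors_of_squarefree hd]
  · rw [zero_div]

section EulerProduct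

variable {R : Type*} [NormedCommRing R] (v : ℕ → R)

lemma tsum_squarefreeProd_prime_pow {p : ℕ} (hp : p.Prime) :
    ∑' e : ℕ, squarefreeProd v (p ^ e) = 1 + v p := by
  rw [tsum_eq_sum (s := {0, 1}) fun e he => squarefreeProd_prime_pow v hp (by
    simp only [mem_insert, mem_singleton] at he; omega)]
  rw [sum_pair zero_ne_one, pow_zero, pow_one, squarefreeProd_one, squarefreeProd_prime v hp]

lemma hasProd_one_add_squarefreeProd [CompleteSpace R] (hsum : Summable (‖squarefreeProd v ·‖)) :
    HasProd (fun p : Nat.Primes => 1 + v p) (∑' d, squarefreeProd v d) := by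
  have hfactor : (fun p : Nat.Primes => ∑' e, squarefreeProd v (p ^ e)) =
      fun p : Nat.Primes => 1 + v p :=
    funext fun p => tsum_squarefreeProd_prime_pow v p.prop
  simpa only [hfactor] using EulerProduct.eulerProduct_hasProd (squarefreeProd_one v)
    (squarefreeProd_mul v) hsum (squarefreeProd_zero v)

end EulerProduct

lemma abs_squarefreeProd_le {v w : ℕ → ℝ} (h : ∀ p, p.Prime → |v p| ≤ w p) (d : ℕ) :
    |squarefreeProd v d| ≤ squarefreeProd w d := by
  unfold squarefreeProd
  split_ifs
  · rw [abs_prod]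
    exact prod_le_prod (fun _ _ => abs_nonneg _)
      fun p hp => h p (Nat.prime_of_mem_primeFactors hp)
  · rw [abs_zero]

lemma summable_norm_squarefreeProd {v : ℕ → ℝ} {σ : ℝ} (hσ : 1 < σ) (h2 : |v 2| ≤ 1)
    (hodd : ∀ q, q.Prime → q ≠ 2 → |v q| ≤ (q : ℝ) ^ (-σ)) :
    Summable (‖squarefreeProd v ·‖) := by
  have h2σ : (1 : ℝ) ≤ 2 ^ σ := Real.one_le_rpow (by norm_num) (by linarith)
  set w : ℕ → ℝ := fun p => (p : ℝ) ^ (-σ) * if p = 2 then 2 ^ σ else 1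
  have hvw : ∀ p, p.Prime → |v p| ≤ w p := by
    intro p hp
    by_cases hp2 : p = 2
    · subst hp2
      simpa [w, Real.rpow_neg, inv_mul_cancel₀ (Real.rpow_pos_of_pos two_pos σ).ne'] using h2
    · simpa [w, hp2] using hodd p hp hp2
  have hw : ∀ d, squarefreeProd w d ≤ 2 ^ σ * (d : ℝ) ^ (-σ) := by
    intro d
    unfold squarefreeProd
    split_ifs with hd
    · rw [prod_mul_distrib, prod_ite_eq', Real.finsetProd_rpow _ _ fun _ _ => Nat.cast_nonneg _,
        ← Nat.cast_prod, Nat.prod_primeFactors_of_squarefree hd, mul_comm]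
      gcongr
      split_ifs <;> linarith
    · positivity
  refine .of_nonneg_of_le (fun _ => norm_nonneg _) (fun d => ?_)
    ((Real.summable_nat_rpow.mpr (neg_lt_neg hσ)).mul_left (2 ^ σ))
  exact (abs_squarefreeProd_le hvw d).trans (hw d)

lemma squarefreeProd_nonneg {v : ℕ → ℝ} (hv : ∀ p, p.Prime → 0 ≤ v p) (d : ℕ) :
    0 ≤ squarefreeProd v d := by
  unfold squarefreeProd
  split_ifs
  · exact prod_nonneg fun p hp => hv p (Nat.prime_of_mem_primeFactors hp)
  · exact le_rfl

lemma one_le_tsum_squarefreeProd {v : ℕ → ℝ} (hv : ∀ p, p.Prime → 0 ≤ v p)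
    (hsum : Summable (squarefreeProd v)) : 1 ≤ ∑' d, squarefreeProd v d :=
  squarefreeProd_one v ▸ hsum.le_tsum 1 fun d _ => squarefreeProd_nonneg hv d

lemma inv_mul_sub_one_le_rpow_neg_three_halves {x : ℝ} (hx : 3 ≤ x) :
    (x * (x - 1))⁻¹ ≤ x ^ (-(3 / 2 : ℝ)) := by
  have hsqrt : √x ≤ x - 1 := Real.sqrt_le_iff.mpr ⟨by linarith, by nlinarith⟩
  rw [Real.rpow_neg (by linarith), show (3 / 2 : ℝ) = 1 + 1 / 2 by norm_num,
    Real.rpow_add (by linarith), Real.rpow_one, ← Real.sqrt_eq_rpow]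
  gcongr

lemma summable_norm_squarefreeProd_of_le {v : ℕ → ℝ} (h2 : |v 2| ≤ 1)
    (hodd : ∀ q : ℕ, 3 ≤ q → |v q| ≤ ((q : ℝ) * (q - 1))⁻¹) :
    Summable (‖squarefreeProd v ·‖) :=
  summable_norm_squarefreeProd (σ := 3 / 2) (by norm_num) h2 fun q hq hq2 =>
    have hq3 := hq.three_le_of_ne_two hq2
    (hodd q hq3).trans (inv_mul_sub_one_le_rpow_neg_three_halves (by exact_mod_cast hq3))

lemma hasProd_zeta_two :
    HasProd (fun p : Nat.Primes => (1 - (p : ℝ)⁻¹ ^ 2)⁻¹) (π ^ 2 / 6) := by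
  let f : ℕ →*₀ ℝ := (powMonoidWithZeroHom two_ne_zero).comp
    (invMonoidWithZeroHom.comp (Nat.castRingHom ℝ).toMonoidWithZeroHom)
  have hf : ∀ n : ℕ, f n = 1 / (n : ℝ) ^ 2 := fun n => by
    rw [one_div, ← inv_pow]
    rfl
  have hsum : Summable (‖f ·‖) := by
    simp [hf]
  simpa [hf, ← hasSum_zeta_two.tsum_eq] using
    EulerProduct.eulerProduct_completely_multiplicative_hasProd hsum

lemma hasProd_ite_two {M : Type*} [CommMonoid M] [TopologicalSpace M] (c : M) :
    HasProd (fun p : Nat.Primes => if (p : ℕ) = 2 then c else 1) c := by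
  classical
  convert hasProd_ite_eq (β := Nat.Primes) ⟨2, Nat.prime_two⟩ c using 2 with p
  exact if_congr (Nat.Primes.coe_nat_inj p ⟨2, Nat.prime_two⟩) rfl rfl

noncomputable def murmurQLocal (q : ℕ) : ℝ :=
  if q = 2 then 1 else (q : ℝ) ^ 2 / ((q : ℝ) ^ 4 - 2 * (q : ℝ) ^ 2 - (q : ℝ) + 1)

noncomputable def murmurCbarLocal (q : ℕ) : ℝ :=
  if q = 2 then 0 else -(q : ℝ)⁻¹ ^ 2 - (q : ℝ)⁻¹ ^ 3 / (1 - (q : ℝ)⁻¹ ^ 2)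

noncomputable def murmurALocal (q : ℕ) : ℝ := (q : ℝ) / (((q : ℝ) + 1) ^ 2 * ((q : ℝ) - 1))

lemma murmurALocal_nonneg (p : ℕ) (hp : p.Prime) : 0 ≤ murmurALocal p := by
  have hx : (2 : ℝ) ≤ p := by exact_mod_cast hp.two_le
  exact div_nonneg (by linarith) (mul_nonneg (sq_nonneg _) (by linarith))

lemma murmurQ_eq_squarefreeProd : murmurQ = squarefreeProd murmurQLocal := by
  funext d
  unfold murmurQ squarefreeProd
  congr 1
  rw [← prod_erase (f := murmurQLocal) _ (if_pos rfl : murmurQLocal 2 = 1)]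
  exact prod_congr rfl fun q hq => (if_neg (ne_of_mem_erase hq)).symm

lemma murmurCbar_eq_tprod : murmurCbar = 1 / 3 * ∏' p : Nat.Primes, (1 + murmurCbarLocal p) := by
  have hsupp : Function.mulSupport (fun p : Nat.Primes => 1 + murmurCbarLocal p) ⊆
      {q : Nat.Primes | (q : ℕ) ≠ 2} := by
    intro p hp h2
    simp [murmurCbarLocal, h2] at hp
  rw [murmurCbar, ← tprod_subtype_eq_of_mulSupport_subset hsupp]
  congr 2
  funext ℓ
  rw [murmurCbarLocal, if_neg ℓ.prop]
  ring

lemma murmurA_eq_tprod : murmurA = ∏' p : Nat.Primes, (1 + murmurALocal p) := rfl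

lemma murmurQ_denom_pos {x : ℝ} (hx : 3 ≤ x) : 0 < x ^ 4 - 2 * x ^ 2 - x + 1 := by
  nlinarith [mul_nonneg (sq_nonneg x) (by nlinarith : (0 : ℝ) ≤ x ^ 2 - 9)]

lemma abs_murmurQLocal_le {q : ℕ} (hq : 3 ≤ q) : |murmurQLocal q| ≤ ((q : ℝ) * (q - 1))⁻¹ := by
  have hx : (3 : ℝ) ≤ q := by exact_mod_cast hq
  have hD := murmurQ_denom_pos hx
  rw [murmurQLocal, if_neg (by omega), abs_of_nonneg (by positivity), ← one_div,
    div_le_div_iff₀ hD (by nlinarith)]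
  nlinarith

lemma abs_murmurQLocal_div_le {q : ℕ} (hq : 3 ≤ q) :
    |murmurQLocal q / q| ≤ ((q : ℝ) * (q - 1))⁻¹ := by
  rw [abs_div, Nat.abs_cast]
  exact (div_le_self (abs_nonneg _) (mod_cast (by omega : 1 ≤ q))).trans (abs_murmurQLocal_le hq)

lemma abs_murmurCbarLocal_le {q : ℕ} (hq : 3 ≤ q) :
    |murmurCbarLocal q| ≤ ((q : ℝ) * (q - 1))⁻¹ := by
  have hx : (3 : ℝ) ≤ q := by exact_mod_cast hq
  have hx2 : 0 < (q : ℝ) ^ 2 - 1 := by nlinarith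
  have hval : murmurCbarLocal q = -((q ^ 2 + q - 1) / (q ^ 2 * (q ^ 2 - 1)) : ℝ) := by
    rw [murmurCbarLocal, if_neg (by omega),
      show 1 - (q : ℝ)⁻¹ ^ 2 = (q ^ 2 - 1) / q ^ 2 by field_simp]
    field_simp
    ring
  rw [hval, abs_neg, abs_of_nonneg (div_nonneg (by nlinarith) (by positivity)), ← one_div,
    div_le_div_iff₀ (by positivity) (by nlinarith)]
  nlinarith

lemma abs_murmurALocal_le {q : ℕ} (hq : 3 ≤ q) : |murmurALocal q| ≤ ((q : ℝ) * (q - 1))⁻¹ := by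
  have hx : (3 : ℝ) ≤ q := by exact_mod_cast hq
  rw [murmurALocal, abs_of_nonneg (div_nonneg (by linarith) (by nlinarith)), ← one_div,
    div_le_div_iff₀ (by nlinarith) (by nlinarith)]
  nlinarith

lemma eulerFactor_identity_tsum_murmurQ (p : Nat.Primes) :
    (1 - (p : ℝ)⁻¹ ^ 2)⁻¹ * (1 + murmurCbarLocal p) * (1 + murmurQLocal p) =
      (1 + murmurALocal p) * if (p : ℕ) = 2 then 24 / 11 else 1 := by
  by_cases h2 : (p : ℕ) = 2
  · simp only [murmurCbarLocal, murmurQLocal, murmurALocal, h2]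
    norm_num
  have hx : (3 : ℝ) ≤ p := by exact_mod_cast p.prop.three_le_of_ne_two h2
  have hx2 : (p : ℝ) ^ 2 - 1 ≠ 0 := by nlinarith
  have hx1 : (p : ℝ) - 1 ≠ 0 := by linarith
  have hD := (murmurQ_denom_pos hx).ne'
  rw [murmurCbarLocal, murmurQLocal, murmurALocal, if_neg h2, if_neg h2, if_neg h2, mul_one,
    show 1 - (p : ℝ)⁻¹ ^ 2 = (p ^ 2 - 1) / p ^ 2 by field_simp]
  generalize hDdef : (p : ℝ) ^ 4 - 2 * p ^ 2 - p + 1 = D at hD ⊢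
  field_simp
  rw [← hDdef]
  ring

lemma eulerFactor_identity_tsum_murmurQ_div (p : Nat.Primes) :
    (1 - (p : ℝ)⁻¹ ^ 2)⁻¹ * (1 + murmurCbarLocal p) * (1 + murmurQLocal p / p) =
      if (p : ℕ) = 2 then 2 else 1 := by
  by_cases h2 : (p : ℕ) = 2
  · simp only [murmurCbarLocal, murmurQLocal, h2]
    norm_num
  have hx : (3 : ℝ) ≤ p := by exact_mod_cast p.prop.three_le_of_ne_two h2
  have hx2 : (p : ℝ) ^ 2 - 1 ≠ 0 := by nlinarith
  have hD := (murmurQ_denom_pos hx).ne'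
  rw [murmurCbarLocal, murmurQLocal, if_neg h2, if_neg h2, if_neg h2,
    show 1 - (p : ℝ)⁻¹ ^ 2 = (p ^ 2 - 1) / p ^ 2 by field_simp]
  generalize hDdef : (p : ℝ) ^ 4 - 2 * p ^ 2 - p + 1 = D at hD ⊢
  field_simp
  rw [← hDdef]
  ring

/-- The Euler product identities `(ζ(2)·c̄/A)·∑_d Q(d) = 8/11` and
`ζ(2)·c̄·∑_d Q(d)/d = 2/3`, with `ζ(2) = π²/6`. -/
theorem euler_product_identities :
    ((π ^ 2 / 6) * murmurCbar / murmurA) * (∑' d : ℕ, murmurQ d) = 8 / 11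
    ∧ (π ^ 2 / 6) * murmurCbar * (∑' d : ℕ, murmurQ d / d) = 2 / 3 := by
  have hζ := hasProd_zeta_two
  have hC := hasProd_one_add_squarefreeProd murmurCbarLocal <|
    summable_norm_squarefreeProd_of_le (by simp [murmurCbarLocal]) fun _ => abs_murmurCbarLocal_le
  have hA_sum := summable_norm_squarefreeProd_of_le (by norm_num [murmurALocal, abs_le])
    fun _ => abs_murmurALocal_le
  have hA := hasProd_one_add_squarefreeProd murmurALocal hA_sum
  have hQ := hasProd_one_add_squarefreeProd murmurQLocal <|
    summable_norm_squarefreeProd_of_le (by simp [murmurQLocal]) fun _ => abs_murmurQLocal_le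
  have hQdiv := hasProd_one_add_squarefreeProd (fun p => murmurQLocal p / p) <|
    summable_norm_squarefreeProd_of_le (by norm_num [murmurQLocal, abs_le])
      fun _ => abs_murmurQLocal_div_le
  have hA_pos : 0 < ∑' d, squarefreeProd murmurALocal d :=
    one_pos.trans_le <| one_le_tsum_squarefreeProd murmurALocal_nonneg hA_sum.of_norm
  have h₁ := ((hζ.mul hC).mul hQ).unique <| by
    simpa only [eulerFactor_identity_tsum_murmurQ] using hA.mul (hasProd_ite_two (24 / 11))
  have h₂ := ((hζ.mul hC).mul hQdiv).unique <| by
    simpa only [eulerFactor_identity_tsum_murmurQ_div] using hasProd_ite_two 2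
  rw [murmurCbar_eq_tprod, murmurA_eq_tprod, hC.tprod_eq, hA.tprod_eq, murmurQ_eq_squarefreeProd]
  simp only [squarefreeProd_div_self]
  constructor
  · rw [div_mul_eq_mul_div, div_eq_iff hA_pos.ne']
    linear_combination (1 / 3 : ℝ) * h₁
  · linear_combination (1 / 3 : ℝ) * h₂
end

section
/- Let p be an odd prime and n a positive integer coprime to 2p with squarefree part k(n). Define C_{8n,p} = ∑_{0≤x<8n, x odd} ((x² - 4p)|n), where (·|n) is the Jacobi symbol. Then |C_{8n,p}| ≪ n/k(n), with the implied constant absolute. -/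
/-- The squarefree part of `n`: the product of the primes appearing in `n` to an odd power. -/
def squarefreePart (n : ℕ) : ℕ :=
  ∏ q ∈ n.primeFactors, if Odd (n.factorization q) then q else 1

open Finset

lemma blockSum {M : Type*} [AddCommMonoid M] (f : ℕ → M) (k n : ℕ) :
    ∑ x ∈ range (k * n), f x = ∑ t ∈ range k, ∑ r ∈ range n, f (t * n + r) := by
  induction k with
  | zero => simp
  | succ k ih =>
      rw [Nat.succ_mul, Finset.sum_range_add, ih, Finset.sum_range_succ]

lemma sum_range_zmod {M : Type*} [AddCommMonoid M] (n : ℕ) [NeZero n] (g : ZMod n → M) :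
    ∑ i ∈ range n, g (i : ZMod n) = ∑ x : ZMod n, g x :=
  Finset.sum_nbij' (fun i => (i : ZMod n)) (fun x => x.val)
    (fun _ _ => Finset.mem_univ _)
    (fun x _ => Finset.mem_range.mpr (ZMod.val_lt x))
    (fun a ha => ZMod.val_cast_of_lt (Finset.mem_range.mp ha))
    (fun x _ => ZMod.natCast_rightInverse x)
    (fun _ _ => rfl)

lemma key_char_sum (q : ℕ) [hq : Fact q.Prime] (hq2 : q ≠ 2) (c : ZMod q) (hc : c ≠ 0) :
    ∑ x : ZMod q, quadraticChar (ZMod q) (x ^ 2 - c) = -1 := by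
  have hF : ringChar (ZMod q) ≠ 2 := by rw [ZMod.ringChar_zmod_n]; exact hq2
  have hcount : ∀ d : ZMod q,
      ((quadraticChar (ZMod q) d + 1 : ℤ)) = ∑ y : ZMod q, if y ^ 2 = d then (1:ℤ) else 0 := by
    intro d
    rw [← quadraticChar_card_sqrts hF d]
    have hset : {x : ZMod q | x ^ 2 = d}.toFinset = univ.filter (fun y => y ^ 2 = d) := by
      ext y; simp
    rw [hset, Finset.card_filter]
    push_cast
    rfl
  have h2 : (2 : ZMod q) ≠ 0 := by
    have h : ((2:ℕ) : ZMod q) ≠ 0 := by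
      rw [Ne, ZMod.natCast_eq_zero_iff]
      exact fun h => hq2 ((Nat.prime_dvd_prime_iff_eq hq.out Nat.prime_two).mp h)
    simpa using h
  set r : ZMod q := (2 : ZMod q)⁻¹ with hr
  have h4 : 4 * r ^ 2 = 1 := by
    have : (2:ZMod q) * r = 1 := mul_inv_cancel₀ h2
    linear_combination (2 * r + 1) * this
  have hkey : ∀ u v : ZMod q, ((u+v)*r)^2 - ((u-v)*r)^2 = u*v := by
    intro u v; linear_combination (u * v) * h4
  have hN : ∑ x : ZMod q, ∑ y : ZMod q, (if y ^ 2 = x ^ 2 - c then (1:ℤ) else 0)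
      = (q : ℤ) - 1 := by
    rw [← Finset.sum_product']
    have heq := Fintype.sum_equiv
      (⟨fun p => ((p.1 + p.2) * r, (p.1 - p.2) * r),
        fun p => (p.1 + p.2, p.1 - p.2),
        by intro p; ext <;> simp only <;> ring_nf <;>
             rw [mul_assoc, inv_mul_cancel₀ h2, mul_one],
        by intro p; ext <;> simp only <;> ring_nf <;>
             rw [mul_assoc, inv_mul_cancel₀ h2, mul_one]⟩
        : (ZMod q × ZMod q) ≃ (ZMod q × ZMod q))
      (fun p : ZMod q × ZMod q => if p.1 * p.2 = c then (1:ℤ) else 0)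
      (fun p : ZMod q × ZMod q => if p.2 ^ 2 = p.1 ^ 2 - c then (1:ℤ) else 0)
      (by
        intro p
        simp only [Equiv.coe_fn_mk]
        refine if_congr ?_ rfl rfl
        constructor
        · intro h; linear_combination -h - hkey p.1 p.2
        · intro h; linear_combination -h - hkey p.1 p.2)
    rw [show (Finset.univ : Finset (ZMod q × ZMod q)) = Finset.univ ×ˢ Finset.univ by
      rw [Finset.univ_product_univ]] at heq
    rw [← heq, Finset.sum_product]
    have hinner : ∀ u : ZMod q,
        (∑ v : ZMod q, if u * v = c then (1:ℤ) else 0) = if u = 0 then 0 else 1 := by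
      intro u
      by_cases hu : u = 0
      · subst hu; simp [eq_comm, hc]
      · simp only [hu, if_false]
        have hv : ∀ v : ZMod q, (u * v = c) ↔ (v = u⁻¹ * c) := by
          intro v
          constructor
          · intro h; field_simp [hu, ← h]; linear_combination h
          · intro h; subst h; field_simp
        simp_rw [hv]
        simp
    rw [Finset.sum_congr rfl fun u _ => hinner u]
    have hsplit : ∑ u : ZMod q, (if u = 0 then (0:ℤ) else 1)
        = ∑ u : ZMod q, ((1:ℤ) - if u = 0 then 1 else 0) := by
      refine Finset.sum_congr rfl fun u _ => ?_
      split_ifs <;> ring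
    rw [hsplit, Finset.sum_sub_distrib, Finset.sum_const, Finset.sum_ite_eq' Finset.univ 0]
    simp [Finset.card_univ, ZMod.card]
  have h1 : ∑ x : ZMod q, ((quadraticChar (ZMod q) (x ^ 2 - c) + 1 : ℤ))
      = (q:ℤ) - 1 := by
    rw [Finset.sum_congr rfl fun x _ => hcount _, hN]
  rw [Finset.sum_add_distrib, Finset.sum_const] at h1
  simp only [Finset.card_univ, ZMod.card, nsmul_eq_mul, mul_one] at h1
  linarith

/-- the inner sum over one period, prime modulus -/
lemma prime_sum (q : ℕ) (hq : q.Prime) (hq2 : q ≠ 2) (c : ℤ) (hc : ¬ ((q:ℤ) ∣ c)) :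
    ∑ x ∈ range q, jacobiSym ((x:ℤ)^2 - c) q = -1 := by
  haveI : Fact q.Prime := ⟨hq⟩
  have hcast : ∀ x : ℕ, jacobiSym ((x:ℤ)^2 - c) q
      = quadraticChar (ZMod q) ((x : ZMod q)^2 - (c : ZMod q)) := by
    intro x
    rw [← jacobiSym.legendreSym.to_jacobiSym]
    unfold legendreSym
    congr 1
    push_cast
    ring
  rw [Finset.sum_congr rfl fun x _ => hcast x]
  rw [sum_range_zmod q (fun y : ZMod q => (quadraticChar (ZMod q) (y^2 - (c:ZMod q)) : ℤ))]
  exact key_char_sum q hq2 _ (by rwa [Ne, ZMod.intCast_zmod_eq_zero_iff_dvd])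

/-- trivial bound -/
lemma trivial_bound (c : ℤ) (n : ℕ) :
    |∑ x ∈ range n, jacobiSym ((x:ℤ)^2 - c) n| ≤ n := by
  calc |∑ x ∈ range n, jacobiSym ((x:ℤ)^2 - c) n|
      ≤ ∑ x ∈ range n, |jacobiSym ((x:ℤ)^2 - c) n| := Finset.abs_sum_le_sum_abs _ _
    _ ≤ ∑ _x ∈ range n, 1 := by
        refine Finset.sum_le_sum fun x _ => ?_
        rcases jacobiSym.trichotomy ((x:ℤ)^2 - c) n with h | h | h <;> rw [h] <;> norm_num
    _ = n := by simp

/-- odd prime power -/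
lemma prime_pow_sum (q : ℕ) (hq : q.Prime) (hq2 : q ≠ 2) (e : ℕ) (he : Odd e)
    (c : ℤ) (hc : ¬ ((q:ℤ) ∣ c)) :
    ∑ x ∈ range (q^e), jacobiSym ((x:ℤ)^2 - c) (q^e) = -(q:ℤ)^(e-1) := by
  have hodd : ∀ a : ℤ, jacobiSym a (q^e) = jacobiSym a q := by
    intro a
    rw [jacobiSym.pow_right]
    rcases jacobiSym.trichotomy a q with h | h | h <;> rw [h]
    · exact zero_pow he.pos.ne'
    · exact one_pow e
    · exact he.neg_one_pow
  simp_rw [hodd]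
  have hsplit : q ^ e = q^(e-1) * q := by
    conv_lhs => rw [← Nat.sub_add_cancel he.pos]
    rw [pow_succ]
  rw [hsplit, blockSum]
  have hin : ∀ t ∈ range (q^(e-1)), ∑ r ∈ range q, jacobiSym (((t * q + r : ℕ):ℤ)^2 - c) q
      = -1 := by
    intro t _
    rw [Finset.sum_congr rfl fun r _ => ?_]
    · exact prime_sum q hq hq2 c hc
    · apply jacobiSym.mod_left'
      have h : ((t * q + r : ℕ) : ℤ) ≡ (r : ℤ) [ZMOD q] := by
        show _ % _ = _ % _
        push_cast
        rw [add_comm]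
        exact Int.add_mul_emod_self_right _ _ _
      exact Int.ModEq.sub_right c (h.pow 2)
  rw [Finset.sum_congr rfl hin]
  simp [mul_comm]

lemma jacobi_sq_periodic (c : ℤ) (a : ℕ) (x y : ℕ) (h : x % a = y % a) :
    jacobiSym ((x:ℤ)^2 - c) a = jacobiSym ((y:ℤ)^2 - c) a := by
  apply jacobiSym.mod_left'
  have hx : (x : ℤ) ≡ (y : ℤ) [ZMOD a] := by
    show _ % _ = _ % _
    have h2 := congrArg (Nat.cast : ℕ → ℤ) h
    rwa [Int.natCast_mod, Int.natCast_mod] at h2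
  exact Int.ModEq.sub_right c (hx.pow 2)

lemma crt_mul (c : ℤ) (a b : ℕ) (ha : 0 < a) (hb : 0 < b) (hab : a.Coprime b) :
    ∑ x ∈ range (a*b), jacobiSym ((x:ℤ)^2 - c) (a*b)
      = (∑ x ∈ range a, jacobiSym ((x:ℤ)^2 - c) a)
        * (∑ x ∈ range b, jacobiSym ((x:ℤ)^2 - c) b) := by
  haveI : NeZero a := ⟨ha.ne'⟩
  haveI : NeZero b := ⟨hb.ne'⟩
  have hmul : ∀ x : ℕ, jacobiSym ((x:ℤ)^2 - c) (a*b)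
      = jacobiSym ((x:ℤ)^2 - c) a * jacobiSym ((x:ℤ)^2 - c) b := fun x =>
    jacobiSym.mul_right _ a b
  rw [Finset.sum_congr rfl fun x _ => hmul x]
  rw [Finset.sum_mul_sum]
  rw [← Finset.sum_product']
  apply Finset.sum_nbij' (fun x => (x % a, x % b))
    (fun p => (Nat.chineseRemainder hab p.1 p.2 : ℕ) % (a*b))
  · intro x _
    exact Finset.mem_product.mpr ⟨Finset.mem_range.mpr (Nat.mod_lt _ ha),
      Finset.mem_range.mpr (Nat.mod_lt _ hb)⟩
  · intro p _
    exact Finset.mem_range.mpr (Nat.mod_lt _ (Nat.mul_pos ha hb))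
  · -- j (i x) = x
    intro x hx
    have hx' := Finset.mem_range.mp hx
    have h1 : x ≡ x % a [MOD a] := (Nat.mod_modEq x a).symm
    have h2 : x ≡ x % b [MOD b] := (Nat.mod_modEq x b).symm
    have := Nat.chineseRemainder_modEq_unique hab h1 h2
    have heq : x % (a*b) = (Nat.chineseRemainder hab (x % a) (x % b) : ℕ) % (a*b) := this
    rw [← heq, Nat.mod_eq_of_lt hx']
  · -- i (j p) = p
    intro p hp
    have hp' := Finset.mem_product.mp hp
    obtain ⟨hcr1, hcr2⟩ := (Nat.chineseRemainder hab p.1 p.2).prop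
    ext
    · show ((Nat.chineseRemainder hab p.1 p.2 : ℕ) % (a*b)) % a = p.1
      rw [Nat.mod_mod_of_dvd _ ⟨b, rfl⟩]
      rw [show (Nat.chineseRemainder hab p.1 p.2 : ℕ) % a = p.1 % a from hcr1]
      exact Nat.mod_eq_of_lt (Finset.mem_range.mp hp'.1)
    · show ((Nat.chineseRemainder hab p.1 p.2 : ℕ) % (a*b)) % b = p.2
      rw [Nat.mod_mod_of_dvd _ ⟨a, mul_comm a b⟩]
      rw [show (Nat.chineseRemainder hab p.1 p.2 : ℕ) % b = p.2 % b from hcr2]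
      exact Nat.mod_eq_of_lt (Finset.mem_range.mp hp'.2)
  · intro x _
    show _ = _
    rw [jacobi_sq_periodic c a x (x % a) (Nat.mod_mod_of_dvd x dvd_rfl).symm,
      jacobi_sq_periodic c b x (x % b) (Nat.mod_mod_of_dvd x dvd_rfl).symm]

lemma squarefreePart_pos (n : ℕ) : 0 < squarefreePart n := by
  apply Finset.prod_pos
  intro q hq
  split_ifs
  · exact (Nat.prime_of_mem_primeFactors hq).pos
  · exact one_pos

lemma squarefreePart_one : squarefreePart 1 = 1 := by simp [squarefreePart]

lemma squarefreePart_prime_pow (q e : ℕ) (hq : q.Prime) (he : e ≠ 0) :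
    squarefreePart (q ^ e) = if Odd e then q else 1 := by
  unfold squarefreePart
  rw [Nat.primeFactors_prime_pow he hq, Finset.prod_singleton,
    hq.factorization_pow]
  simp

lemma squarefreePart_mul (a b : ℕ) (ha : a ≠ 0) (hb : b ≠ 0) (hab : a.Coprime b) :
    squarefreePart (a * b) = squarefreePart a * squarefreePart b := by
  unfold squarefreePart
  rw [Nat.primeFactors_mul ha hb,
    Finset.prod_union (Nat.Coprime.disjoint_primeFactors hab)]
  congr 1
  · refine Finset.prod_congr rfl fun q hq => ?_
    have hqb : b.factorization q = 0 := by
      apply Nat.factorization_eq_zero_of_not_dvd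
      intro hdvd
      have h1 : q ∣ Nat.gcd a b := Nat.dvd_gcd (Nat.dvd_of_mem_primeFactors hq) hdvd
      rw [Nat.Coprime] at hab
      rw [hab, Nat.dvd_one] at h1
      exact (Nat.prime_of_mem_primeFactors hq).ne_one h1
    rw [Nat.factorization_mul ha hb]
    simp [hqb]
  · refine Finset.prod_congr rfl fun q hq => ?_
    have hqa : a.factorization q = 0 := by
      apply Nat.factorization_eq_zero_of_not_dvd
      intro hdvd
      have h1 : q ∣ Nat.gcd a b := Nat.dvd_gcd hdvd (Nat.dvd_of_mem_primeFactors hq)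
      rw [Nat.Coprime] at hab
      rw [hab, Nat.dvd_one] at h1
      exact (Nat.prime_of_mem_primeFactors hq).ne_one h1
    rw [Nat.factorization_mul ha hb]
    simp [hqa]

lemma master (c : ℤ) : ∀ n : ℕ, 0 < n → Odd n →
    (∀ q : ℕ, q.Prime → q ∣ n → ¬ ((q:ℤ) ∣ c)) →
    (squarefreePart n : ℤ) * |∑ x ∈ range n, jacobiSym ((x:ℤ)^2 - c) n| ≤ n := by
  intro n
  induction n using Nat.recOnPosPrimePosCoprime with
  | prime_pow q e hq he =>
      intro _ hodd hc
      have hqp : q.Prime := hq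
      have hq2 : q ≠ 2 := by
        rintro rfl
        have heven : Even (2 ^ e) := Nat.even_pow.mpr ⟨even_two, he.ne'⟩
        exact (Nat.not_odd_iff_even.mpr heven) hodd
      have hc' : ¬ ((q:ℤ) ∣ c) := hc q hqp (dvd_pow_self q he.ne')
      rcases Nat.even_or_odd e with hee | heo
      · rw [squarefreePart_prime_pow q e hqp he.ne',
          if_neg (Nat.not_odd_iff_even.mpr hee)]
        have := trivial_bound c (q ^ e)
        push_cast at this ⊢
        linarith
      · rw [squarefreePart_prime_pow q e hqp he.ne', if_pos heo,
          prime_pow_sum q hqp hq2 e heo c hc']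
        rw [abs_neg, abs_pow, Nat.abs_cast]
        rw [← pow_succ']
        rw [Nat.sub_add_cancel he]
        push_cast
        exact le_refl _
  | zero => intro h; omega
  | one =>
      intro _ _ _
      rw [squarefreePart_one]
      simp
  | coprime a b ha hb hab iha ihb =>
      intro hpos hodd hc
      have ha0 : 0 < a := by omega
      have hb0 : 0 < b := by omega
      obtain ⟨hodda, hoddb⟩ := Nat.odd_mul.mp hodd
      have hca : ∀ q : ℕ, q.Prime → q ∣ a → ¬ ((q:ℤ) ∣ c) :=
        fun q hq hd => hc q hq (hd.trans ⟨b, rfl⟩)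
      have hcb : ∀ q : ℕ, q.Prime → q ∣ b → ¬ ((q:ℤ) ∣ c) :=
        fun q hq hd => hc q hq (hd.trans ⟨a, mul_comm a b⟩)
      have Ha := iha ha0 hodda hca
      have Hb := ihb hb0 hoddb hcb
      rw [crt_mul c a b ha0 hb0 hab, squarefreePart_mul a b ha0.ne' hb0.ne' hab]
      rw [abs_mul]
      push_cast
      calc (squarefreePart a : ℤ) * (squarefreePart b : ℤ)
            * (|∑ x ∈ range a, jacobiSym ((x:ℤ)^2 - c) a|
              * |∑ x ∈ range b, jacobiSym ((x:ℤ)^2 - c) b|)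
          = ((squarefreePart a : ℤ) * |∑ x ∈ range a, jacobiSym ((x:ℤ)^2 - c) a|)
            * ((squarefreePart b : ℤ) * |∑ x ∈ range b, jacobiSym ((x:ℤ)^2 - c) b|) := by ring
        _ ≤ (a : ℤ) * b := by
            apply mul_le_mul Ha Hb (mul_nonneg (by positivity) (abs_nonneg _)) (by positivity)

lemma odd_filter_sum (c : ℤ) (n : ℕ) (hn : Odd n) :
    ∑ x ∈ (Finset.range (8 * n)).filter (fun x => Odd x), jacobiSym ((x:ℤ)^2 - c) n
      = 4 * ∑ r ∈ range n, jacobiSym ((r:ℤ)^2 - c) n := by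
  rw [Finset.sum_filter]
  rw [blockSum (fun x => if Odd x then jacobiSym ((x:ℤ)^2 - c) n else 0) 8 n]
  have hper : ∀ t r : ℕ, (if Odd (t*n+r) then jacobiSym (((t*n+r : ℕ):ℤ)^2 - c) n else 0)
      = (if Odd (t*n+r) then jacobiSym ((r:ℤ)^2 - c) n else 0) := by
    intro t r
    rw [jacobi_sq_periodic c n (t*n+r) r (by rw [add_comm, Nat.add_mul_mod_self_right])]
  simp_rw [hper]
  rw [Finset.sum_comm]
  have hinner : ∀ r : ℕ, (∑ t ∈ range 8, if Odd (t*n+r) then jacobiSym ((r:ℤ)^2 - c) n else 0)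
      = 4 * jacobiSym ((r:ℤ)^2 - c) n := by
    intro r
    rw [← Finset.sum_filter]
    rw [Finset.sum_const]
    have hP : ∀ t : ℕ, Odd (t*n+r) ↔ (Odd t ↔ Even r) := by
      intro t
      rw [Nat.odd_add, Nat.odd_mul]
      simp [hn]
    have hcard : ((range 8).filter (fun t => Odd (t*n+r))).card = 4 := by
      rcases Nat.even_or_odd r with hr | hr
      · have heq : (range 8).filter (fun t => Odd (t*n+r))
            = (range 8).filter (fun t => Odd t) := by
          apply Finset.filter_congr
          intro t _
          rw [hP t]
          simp [hr]
        rw [heq]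
        decide
      · have heq : (range 8).filter (fun t => Odd (t*n+r))
            = (range 8).filter (fun t => Even t) := by
          apply Finset.filter_congr
          intro t _
          rw [hP t]
          simp [Nat.not_even_iff_odd.mpr hr, Nat.not_odd_iff_even]
        rw [heq]
        decide
    rw [hcard]
    simp [mul_comm]
  rw [Finset.sum_congr rfl fun r _ => hinner r, ← Finset.mul_sum]

/-- For an odd prime `p` and `n` coprime to `2p`, the character sum
`C_{8n,p} = ∑_{0 ≤ x < 8n, x odd} ((x² - 4p)|n)` (Jacobi symbol) satisfies
`|C_{8n,p}| ≪ n/k(n)` with an absolute implied constant, where `k(n)` is the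
squarefree part of `n`. -/
theorem C8np_bound :
    ∃ C : ℝ, 0 < C ∧ ∀ p n : ℕ, p.Prime → Odd p → 0 < n → n.Coprime (2 * p) →
      |((∑ x ∈ (Finset.range (8 * n)).filter (fun x => Odd x),
          jacobiSym ((x : ℤ) ^ 2 - 4 * p) n : ℤ) : ℝ)|
        ≤ C * n / squarefreePart n := by
  refine ⟨4, by norm_num, ?_⟩
  intro p n hp hpodd hn hco
  have hoddn : Odd n := Nat.coprime_two_right.mp
    (Nat.Coprime.coprime_dvd_right ⟨p, rfl⟩ hco)
  set c : ℤ := 4 * (p : ℤ) with hc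
  have hq : ∀ q : ℕ, q.Prime → q ∣ n → ¬ ((q:ℤ) ∣ c) := by
    intro q hqp hqn hdvd
    have hqco : q.Coprime (2 * p) := Nat.Coprime.coprime_dvd_left hqn hco
    have hdn : q ∣ 4 * p := by
      have : ((q:ℤ)) ∣ ((4 * p : ℕ) : ℤ) := by push_cast; exact hdvd
      exact_mod_cast this
    have hd2p : q ∣ 2 * p := by
      have h4 : 4 * p = 2 * (2 * p) := by ring
      rw [h4] at hdn
      rcases (Nat.Prime.dvd_mul hqp).mp hdn with h | h
      · exact h.trans ⟨p, by ring⟩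
      · exact h
    have h1 : q ∣ Nat.gcd q (2 * p) := Nat.dvd_gcd dvd_rfl hd2p
    rw [Nat.Coprime] at hqco
    rw [hqco, Nat.dvd_one] at h1
    exact hqp.ne_one h1
  have hM := master c n hn hoddn hq
  have hfilter := odd_filter_sum c n hoddn
  have hC : ((∑ x ∈ (Finset.range (8 * n)).filter (fun x => Odd x),
      jacobiSym ((x : ℤ) ^ 2 - 4 * p) n : ℤ))
      = 4 * ∑ r ∈ range n, jacobiSym ((r:ℤ)^2 - c) n := by
    rw [← hfilter]
  rw [hC]
  have hk : (0:ℝ) < (squarefreePart n : ℝ) := by exact_mod_cast squarefreePart_pos n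
  rw [le_div_iff₀ hk]
  push_cast
  rw [abs_mul]
  have habs : |(4:ℝ)| = 4 := by norm_num
  rw [habs]
  have hM' : (squarefreePart n : ℝ) * |((∑ r ∈ range n, jacobiSym ((r:ℤ)^2 - c) n : ℤ) : ℝ)|
      ≤ (n : ℝ) := by
    rw [← Int.cast_abs]
    exact_mod_cast hM
  push_cast at hM'
  nlinarith [abs_nonneg (∑ x ∈ range n, ((jacobiSym ((x:ℤ)^2 - c) n : ℤ) : ℝ))]
end
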